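/- arXiv:1911.03629 — 12 statements merged into one kernel-verified Lean document; each statement's English description precedes it below -/
import Mathlib

section
/- In the tit-for-tat production dynamic, for every pair of players (i,j) and every time t ≥ 1, y_{i,j}(t+1)/y_{i,j}(t-1) = (v_i · v_j) · x_i(t-1)/x_i(t+1). -/
open Filter Finset

/- Unfolding the update rule twice, `y_{i,j}(s+2) = v_j y_{j,i}(s+1) x_j(s+1) / x_i(s+2)` and
`y_{j,i}(s+1) = v_i y_{i,j}(s) x_i(s) / x_j(s+1)`, the amount `x_j(s+1)` cancels. -/

theorem fraction_add_two_of_update {n : ℕ} {x : ℕ → Fin n → ℝ} {y : ℕ → Fin n → Fin n → ℝ}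
    {v : Fin n → ℝ} (hupd : ∀ t i j, y (t + 1) i j = v j * (y t j i * x t j) / x (t + 1) i)
    (s : ℕ) (i j : Fin n) (hx : x (s + 1) j ≠ 0) :
    y (s + 2) i j = v i * v j * y s i j * x s i / x (s + 2) i := by
  rw [hupd (s + 1) i j, hupd s j i]
  field_simp

theorem stmt_1_general
(n : ℕ) (x : ℕ → Fin n → ℝ) (y : ℕ → Fin n → Fin n → ℝ) (v : Fin n → ℝ)
    (hx : ∀ t i, 0 < x t i)
    (hy : ∀ t i j, 0 < y t i j)
    (hupd : ∀ t i j, y (t + 1) i j = v j * (y t j i * x t j) / x (t + 1) i)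
    (i j : Fin n) (t : ℕ) (ht : 1 ≤ t) :
    y (t + 1) i j / y (t - 1) i j = (v i * v j) * (x (t - 1) i / x (t + 1) i) := by
  obtain ⟨s, rfl⟩ := Nat.exists_eq_add_of_le' ht
  rw [Nat.add_sub_cancel, fraction_add_two_of_update hupd s i j (hx (s + 1) j).ne']
  have := (hy s i j).ne'
  field_simp

theorem stmt_1
(n : ℕ) (x : ℕ → Fin n → ℝ) (y : ℕ → Fin n → Fin n → ℝ) (v : Fin n → ℝ)
    (hv : ∀ j, 0 < v j)
    (hx : ∀ t i, 0 < x t i)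
    (hy : ∀ t i j, 0 < y t i j)
    (hsum : ∀ t i, ∑ j, y t i j = 1)
    (hprod : ∀ t i, x (t + 1) i = ∑ j, v j * (y t j i * x t j))
    (hupd : ∀ t i j, y (t + 1) i j = v j * (y t j i * x t j) / x (t + 1) i)
    (i j : Fin n) (t : ℕ) (ht : 1 ≤ t) :
    y (t + 1) i j / y (t - 1) i j = (v i * v j) * (x (t - 1) i / x (t + 1) i) :=
  stmt_1_general n x y v hx hy hupd i j t ht
end

section
/- In the tit-for-tat production dynamic, for every pair of players (i,j) and every ℓ ∈ ℕ, x_i(2ℓ+1) · y_{i,j}(2ℓ+1) = (v_i·v_j)^ℓ · x_i(1) · y_{i,j}(1). -/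
open Filter Finset

theorem stmt_2
(n : ℕ) (x : ℕ → Fin n → ℝ) (y : ℕ → Fin n → Fin n → ℝ) (v : Fin n → ℝ)
    (hv : ∀ j, 0 < v j)
    (hx : ∀ t i, 0 < x t i)
    (hy : ∀ t i j, 0 < y t i j)
    (hsum : ∀ t i, ∑ j, y t i j = 1)
    (hprod : ∀ t i, x (t + 1) i = ∑ j, v j * (y t j i * x t j))
    (hupd : ∀ t i j, y (t + 1) i j = v j * (y t j i * x t j) / x (t + 1) i)
    (i j : Fin n) (l : ℕ) :
    x (2 * l + 1) i * y (2 * l + 1) i j = (v i * v j) ^ l * (x 1 i * y 1 i j) := by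
  have key : ∀ t (a b : Fin n), x (t + 1) a * y (t + 1) a b = v b * (y t b a * x t b) := by
    intro t a b
    rw [hupd t a b, mul_div_assoc', mul_comm (x (t+1) a), mul_div_assoc,
      div_self (hx (t+1) a).ne', mul_one]
  induction l with
  | zero => simp
  | succ l ih =>
      have h1 : 2 * (l + 1) + 1 = (2 * l + 2) + 1 := by ring
      have h2 : 2 * l + 2 = (2 * l + 1) + 1 := by ring
      rw [h1, key (2*l+2) i j, h2]
      have hk := key (2*l+1) j i
      linear_combination v j * hk + v i * v j * ih
end

section
/- In the tit-for-tat production dynamic, for every pair of players (i,j) and every ℓ ∈ ℕ, x_i(2ℓ) · y_{i,j}(2ℓ) = (v_i·v_j)^ℓ · x_i(0) · y_{i,j}(0). -/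
open Filter Finset

theorem stmt_3
(n : ℕ) (x : ℕ → Fin n → ℝ) (y : ℕ → Fin n → Fin n → ℝ) (v : Fin n → ℝ)
    (hv : ∀ j, 0 < v j)
    (hx : ∀ t i, 0 < x t i)
    (hy : ∀ t i j, 0 < y t i j)
    (hsum : ∀ t i, ∑ j, y t i j = 1)
    (hprod : ∀ t i, x (t + 1) i = ∑ j, v j * (y t j i * x t j))
    (hupd : ∀ t i j, y (t + 1) i j = v j * (y t j i * x t j) / x (t + 1) i)
    (i j : Fin n) (l : ℕ) :
    x (2 * l) i * y (2 * l) i j = (v i * v j) ^ l * (x 0 i * y 0 i j) := by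
  have key : ∀ t (a b : Fin n), x (t + 1) a * y (t + 1) a b = v b * (y t b a * x t b) := by
    intro t a b
    rw [hupd t a b, mul_div_cancel₀ _ (hx (t + 1) a).ne']
  induction l with
  | zero => simp
  | succ l ih =>
      have h2 : 2 * (l + 1) = 2 * l + 1 + 1 := by ring
      rw [h2, key, mul_comm (y (2 * l + 1) j i), key]
      rw [mul_comm (y (2 * l) i j) (x (2 * l) i), ih]
      ring
end

section
/- In the tit-for-tat production dynamic, for every player i and every ℓ ∈ ℕ, x_i(2ℓ+1) ≥ (v_i·v*)^ℓ · x_i(1) · y_{i,i*}(1), where i* is a player with v_{i*} = v* = max_j v_j. -/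
open Filter Finset

theorem stmt_4
(n : ℕ) (x : ℕ → Fin n → ℝ) (y : ℕ → Fin n → Fin n → ℝ) (v : Fin n → ℝ)
    (hv : ∀ j, 0 < v j)
    (hx : ∀ t i, 0 < x t i)
    (hy : ∀ t i j, 0 < y t i j)
    (hsum : ∀ t i, ∑ j, y t i j = 1)
    (hprod : ∀ t i, x (t + 1) i = ∑ j, v j * (y t j i * x t j))
    (hupd : ∀ t i j, y (t + 1) i j = v j * (y t j i * x t j) / x (t + 1) i)
(vstar : ℝ) (hmax : ∀ j, v j ≤ vstar) (iStar : Fin n) (hiStar : v iStar = vstar)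
    (i : Fin n) (l : ℕ) :
    x (2 * l + 1) i ≥ (v i * vstar) ^ l * x 1 i * y 1 i iStar := by
  -- key: y (t+1) a b * x (t+1) a = v b * y t b a * x t b
  have key : ∀ t a b, y (t + 1) a b * x (t + 1) a = v b * (y t b a * x t b) := by
    intro t a b
    rw [hupd t a b, div_mul_cancel₀]
    exact (hx (t + 1) a).ne'
  have A : ∀ m, x (2 * m + 1) i * y (2 * m + 1) i iStar
      = (v i * vstar) ^ m * (x 1 i * y 1 i iStar) := by
    intro m
    induction m with
    | zero => simp
    | succ k ih =>
      have h2 : 2 * (k + 1) + 1 = (2 * k + 1) + 1 + 1 := by ring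
      rw [h2, mul_comm (x _ i), key, key, mul_comm (y (2 * k + 1) i iStar), ih, hiStar]
      ring
  have hyle : y (2 * l + 1) i iStar ≤ 1 := by
    rw [← hsum (2 * l + 1) i]
    exact single_le_sum (fun j _ => (hy _ i j).le) (mem_univ iStar)
  calc x (2 * l + 1) i ≥ x (2 * l + 1) i * y (2 * l + 1) i iStar := by
        nlinarith [hx (2 * l + 1) i, hy (2 * l + 1) i iStar]
    _ = (v i * vstar) ^ l * (x 1 i * y 1 i iStar) := A l
    _ = (v i * vstar) ^ l * x 1 i * y 1 i iStar := by ring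
end

section
/- In the tit-for-tat production dynamic, for every player i and every ℓ ∈ ℕ, x_i(2ℓ+1) ≤ x_i(1) · (v_i·v*)^ℓ, where v* = max_j v_j. -/
/-!
Under tit-for-tat every player returns the good it received one round earlier, scaled by the
value of that good: `y (t+1) j i * x (t+1) j = v i * y t i j * x t i`. Hence
`x (t+2) i = v i * x t i * ∑ j, v j * y t i j`, and the sum is a convex combination of the
values, so at most `v*`. Iterating this two-step bound from `t = 1` gives the claim.
-/

open Finset

theorem sum_mul_le_of_sum_eq_one {ι : Type*} (s : Finset ι) {v w : ι → ℝ} {c : ℝ}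
    (hv : ∀ j ∈ s, v j ≤ c) (hw : ∀ j ∈ s, 0 ≤ w j) (hsum : ∑ j ∈ s, w j = 1) :
    ∑ j ∈ s, v j * w j ≤ c :=
  calc ∑ j ∈ s, v j * w j ≤ ∑ j ∈ s, c * w j :=
        sum_le_sum fun j hj => mul_le_mul_of_nonneg_right (hv j hj) (hw j hj)
    _ = c := by rw [← mul_sum, hsum, mul_one]

theorem le_mul_pow_of_le_mul_two_step {u : ℕ → ℝ} {c : ℝ} (hc : 0 ≤ c)
    (hstep : ∀ t, u (t + 2) ≤ c * u t) (s l : ℕ) :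
    u (2 * l + s) ≤ u s * c ^ l := by
  induction l with
  | zero => simp
  | succ l ih =>
    calc u (2 * (l + 1) + s) = u (2 * l + s + 2) := by ring_nf
      _ ≤ c * u (2 * l + s) := hstep _
      _ ≤ c * (u s * c ^ l) := mul_le_mul_of_nonneg_left ih hc
      _ = u s * c ^ (l + 1) := by ring

section TitForTat

variable {ι : Type*} [Fintype ι] {x : ℕ → ι → ℝ} {y : ℕ → ι → ι → ℝ} {v : ι → ℝ}

theorem titForTat_two_step_eq (hx : ∀ t i, x t i ≠ 0)
    (hprod : ∀ t i, x (t + 1) i = ∑ j, v j * (y t j i * x t j))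
    (hupd : ∀ t i j, y (t + 1) i j = v j * (y t j i * x t j) / x (t + 1) i) (t : ℕ) (i : ι) :
    x (t + 2) i = v i * x t i * ∑ j, v j * y t i j := by
  have hreturn : ∀ j, y (t + 1) j i * x (t + 1) j = v i * (y t i j * x t i) := fun j => by
    rw [hupd, div_mul_cancel₀ _ (hx _ j)]
  rw [hprod, mul_sum]
  exact sum_congr rfl fun j _ => by rw [hreturn]; ring

theorem titForTat_two_step_le (hv : ∀ j, 0 < v j) (hx : ∀ t i, 0 < x t i)
    (hy : ∀ t i j, 0 < y t i j) (hsum : ∀ t i, ∑ j, y t i j = 1)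
    (hprod : ∀ t i, x (t + 1) i = ∑ j, v j * (y t j i * x t j))
    (hupd : ∀ t i j, y (t + 1) i j = v j * (y t j i * x t j) / x (t + 1) i)
    {vstar : ℝ} (hmax : ∀ j, v j ≤ vstar) (t : ℕ) (i : ι) :
    x (t + 2) i ≤ v i * vstar * x t i := by
  have hmean : ∑ j, v j * y t i j ≤ vstar :=
    sum_mul_le_of_sum_eq_one _ (fun j _ => hmax j) (fun j _ => (hy t i j).le) (hsum t i)
  calc x (t + 2) i = v i * x t i * ∑ j, v j * y t i j :=
        titForTat_two_step_eq (fun t i => (hx t i).ne') hprod hupd t i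
    _ ≤ v i * x t i * vstar := by gcongr; exact mul_nonneg (hv i).le (hx t i).le
    _ = v i * vstar * x t i := by ring

end TitForTat

theorem stmt_5_general
(n : ℕ) (x : ℕ → Fin n → ℝ) (y : ℕ → Fin n → Fin n → ℝ) (v : Fin n → ℝ)
    (hv : ∀ j, 0 < v j)
    (hx : ∀ t i, 0 < x t i)
    (hy : ∀ t i j, 0 < y t i j)
    (hsum : ∀ t i, ∑ j, y t i j = 1)
    (hprod : ∀ t i, x (t + 1) i = ∑ j, v j * (y t j i * x t j))
    (hupd : ∀ t i j, y (t + 1) i j = v j * (y t j i * x t j) / x (t + 1) i)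
(vstar : ℝ) (hmax : ∀ j, v j ≤ vstar)
    (i : Fin n) (l : ℕ) :
    x (2 * l + 1) i ≤ x 1 i * (v i * vstar) ^ l := by
  have hc : 0 ≤ v i * vstar := mul_nonneg (hv i).le ((hv i).le.trans (hmax i))
  exact le_mul_pow_of_le_mul_two_step (u := fun t => x t i) hc
    (fun t => titForTat_two_step_le hv hx hy hsum hprod hupd hmax t i) 1 l

theorem stmt_5
(n : ℕ) (x : ℕ → Fin n → ℝ) (y : ℕ → Fin n → Fin n → ℝ) (v : Fin n → ℝ)
    (hv : ∀ j, 0 < v j)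
    (hx : ∀ t i, 0 < x t i)
    (hy : ∀ t i j, 0 < y t i j)
    (hsum : ∀ t i, ∑ j, y t i j = 1)
    (hprod : ∀ t i, x (t + 1) i = ∑ j, v j * (y t j i * x t j))
    (hupd : ∀ t i j, y (t + 1) i j = v j * (y t j i * x t j) / x (t + 1) i)
(vstar : ℝ) (hmax : ∀ j, v j ≤ vstar) (iStar : Fin n) (hiStar : v iStar = vstar)
    (i : Fin n) (l : ℕ) :
    x (2 * l + 1) i ≤ x 1 i * (v i * vstar) ^ l :=
  stmt_5_general n x y v hv hx hy hsum hprod hupd vstar hmax i l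
end

section
/- In the tit-for-tat production dynamic, for every player i there exist constants c_i, d_i > 0 such that c_i·(v_i·v*)^⌊t/2⌋ ≤ x_i(t) ≤ d_i·(v_i·v*)^⌊t/2⌋ for all t ∈ ℕ, where v* = max_j v_j. -/
open Filter Finset

theorem stmt_6
(n : ℕ) (x : ℕ → Fin n → ℝ) (y : ℕ → Fin n → Fin n → ℝ) (v : Fin n → ℝ)
    (hv : ∀ j, 0 < v j)
    (hx : ∀ t i, 0 < x t i)
    (hy : ∀ t i j, 0 < y t i j)
    (hsum : ∀ t i, ∑ j, y t i j = 1)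
    (hprod : ∀ t i, x (t + 1) i = ∑ j, v j * (y t j i * x t j))
    (hupd : ∀ t i j, y (t + 1) i j = v j * (y t j i * x t j) / x (t + 1) i)
(vstar : ℝ) (hmax : ∀ j, v j ≤ vstar) (iStar : Fin n) (hiStar : v iStar = vstar)
    (i : Fin n) :
    ∃ c d : ℝ, 0 < c ∧ 0 < d ∧
      ∀ t : ℕ, c * (v i * vstar) ^ (t / 2) ≤ x t i ∧ x t i ≤ d * (v i * vstar) ^ (t / 2) := by
  have hvstar : 0 < vstar := hiStar ▸ hv iStar
  set z : ℕ → Fin n → Fin n → ℝ := fun t i j => y t i j * x t i with hz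
  have hzpos : ∀ t i j, 0 < z t i j := fun t i j => mul_pos (hy t i j) (hx t i)
  have hstep : ∀ t i j, z (t+1) i j = v j * z t j i := by
    intro t i j
    have hne : x (t+1) i ≠ 0 := (hx (t+1) i).ne'
    simp only [hz]
    rw [hupd, div_mul_cancel₀ _ hne]
  have hxsum : ∀ t i, x t i = ∑ j, z t i j := by
    intro t i
    simp only [hz]
    rw [← Finset.sum_mul, hsum, one_mul]
  have heven : ∀ s : ℕ, ∀ i j, z (2*s) i j = (v i * v j)^s * z 0 i j := by
    intro s
    induction s with
    | zero => simp
    | succ s ih =>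
      intro i j
      have h2 : 2*(s+1) = (2*s+1)+1 := by ring
      rw [h2, hstep, hstep, ih]
      ring
  have hodd : ∀ s : ℕ, ∀ i j, z (2*s+1) i j = v j * ((v j * v i)^s * z 0 j i) := by
    intro s i j
    rw [hstep, heven]
  refine ⟨min (z 0 i iStar) (vstar * z 0 iStar i), max (x 0 i) (vstar * ∑ j, z 0 j i),
    lt_min (hzpos 0 i iStar) (mul_pos hvstar (hzpos 0 iStar i)),
    lt_of_lt_of_le (hx 0 i) (le_max_left _ _), ?_⟩
  intro t
  have hvi := hv i
  have hvipos : 0 < v i * vstar := mul_pos hvi hvstar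
  rcases Nat.even_or_odd t with ⟨s, hs⟩ | ⟨s, hs⟩
  · -- even case : t = 2*s
    have ht : t = 2*s := by omega
    have ht2 : t / 2 = s := by omega
    subst ht
    rw [ht2, hxsum]
    constructor
    · calc min (z 0 i iStar) (vstar * z 0 iStar i) * (v i * vstar) ^ s
          ≤ z 0 i iStar * (v i * vstar) ^ s := by
            gcongr
            · exact min_le_left _ _
        _ = z (2*s) i iStar := by rw [heven, hiStar]; ring
        _ ≤ ∑ j, z (2*s) i j :=
            Finset.single_le_sum (fun j _ => (hzpos _ i j).le) (Finset.mem_univ iStar)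
    · calc ∑ j, z (2*s) i j = ∑ j, (v i * v j)^s * z 0 i j := by
            simp only [heven]
        _ ≤ ∑ j, (v i * vstar)^s * z 0 i j := by
            apply Finset.sum_le_sum
            intro j _
            gcongr
            · exact (hzpos 0 i j).le
            · exact (mul_pos hvi (hv j)).le
            · exact hmax j
        _ = (v i * vstar)^s * x 0 i := by rw [← Finset.mul_sum, hxsum]
        _ ≤ max (x 0 i) (vstar * ∑ j, z 0 j i) * (v i * vstar) ^ s := by
            rw [mul_comm]
            gcongr
            · exact le_max_left _ _
  · -- odd case : t = 2*s+1
    have ht2 : t / 2 = s := by omega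
    subst hs
    rw [ht2, hxsum]
    constructor
    · calc min (z 0 i iStar) (vstar * z 0 iStar i) * (v i * vstar) ^ s
          ≤ (vstar * z 0 iStar i) * (v i * vstar) ^ s := by
            gcongr
            · exact min_le_right _ _
        _ = z (2*s+1) i iStar := by rw [hodd, hiStar]; ring
        _ ≤ ∑ j, z (2*s+1) i j :=
            Finset.single_le_sum (fun j _ => (hzpos _ i j).le) (Finset.mem_univ iStar)
    · calc ∑ j, z (2*s+1) i j = ∑ j, v j * ((v j * v i)^s * z 0 j i) := by
            simp only [hodd]
        _ ≤ ∑ j, vstar * ((vstar * v i)^s * z 0 j i) := by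
            apply Finset.sum_le_sum
            intro j _
            have hji : (v j * v i)^s ≤ (vstar * v i)^s :=
              pow_le_pow_left₀ (mul_pos (hv j) hvi).le
                (mul_le_mul_of_nonneg_right (hmax j) hvi.le) s
            exact mul_le_mul (hmax j)
              (mul_le_mul_of_nonneg_right hji (hzpos 0 j i).le)
              (mul_nonneg (pow_pos (mul_pos (hv j) hvi) s).le (hzpos 0 j i).le)
              hvstar.le
        _ = vstar * ((vstar * v i)^s * ∑ j, z 0 j i) := by
            rw [← Finset.mul_sum, ← Finset.mul_sum]
        _ ≤ max (x 0 i) (vstar * ∑ j, z 0 j i) * (v i * vstar) ^ s := by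
            rw [mul_comm vstar (v i)]
            rw [show vstar * ((v i * vstar)^s * ∑ j, z 0 j i)
              = (vstar * ∑ j, z 0 j i) * (v i * vstar)^s by ring]
            gcongr
            · exact le_max_right _ _
end

section
/- In the tit-for-tat production dynamic, if v_i·v* > 1 then x_i(t) → ∞ as t → ∞, where v* = max_j v_j. -/
open Filter Finset

/-!
What player `i` hands to player `j` is returned, scaled by `v j`, one round later, and that return
is handed back, scaled by `v i`, the round after. So `y t i j * x t i` gets multiplied by
`v i * v j` every two rounds. Taking `j` with `v j = v*` and bounding `y t i j ≤ 1` gives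
`x t i ≥ (v i * v*) ^ ⌊t / 2⌋ * c` with `c > 0`.
-/

theorem mul_pow_div_le_of_add_eq_mul {u : ℕ → ℝ} {p : ℕ} {q m : ℝ} (hp : 0 < p) (hq : 0 ≤ q)
    (hu : ∀ t, u (t + p) = q * u t) (hm : ∀ r < p, m ≤ u r) (t : ℕ) :
    m * q ^ (t / p) ≤ u t := by
  induction t using Nat.strong_induction_on with
  | _ t ih =>
    rcases lt_or_ge t p with htp | hpt
    · simpa [Nat.div_eq_of_lt htp] using hm t htp
    · obtain ⟨s, rfl⟩ := Nat.exists_eq_add_of_le' hpt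
      have hs : (s + p) / p = s / p + 1 := Nat.add_div_right s hp
      calc m * q ^ ((s + p) / p) = q * (m * q ^ (s / p)) := by rw [hs, pow_succ]; ring
        _ ≤ q * u s := mul_le_mul_of_nonneg_left (ih s (by omega)) hq
        _ = u (s + p) := (hu s).symm

theorem tendsto_atTop_of_add_eq_mul {u : ℕ → ℝ} {p : ℕ} {q : ℝ} (hp : 0 < p) (hq : 1 < q)
    (hu : ∀ t, u (t + p) = q * u t) (hpos : ∀ r < p, 0 < u r) :
    Tendsto u atTop atTop := by
  obtain ⟨r₀, hr₀, hmin⟩ :=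
    (range p).exists_min_image u ⟨0, mem_range.mpr hp⟩
  have hm : ∀ r < p, u r₀ ≤ u r := fun r hr => hmin r (mem_range.mpr hr)
  have hgeom : Tendsto (fun t => u r₀ * q ^ (t / p)) atTop atTop :=
    ((tendsto_pow_atTop_atTop_of_one_lt hq).comp
      (Nat.tendsto_div_const_atTop hp.ne')).const_mul_atTop (hpos r₀ (mem_range.mp hr₀))
  exact tendsto_atTop_mono (mul_pow_div_le_of_add_eq_mul hp (by linarith) hu hm) hgeom

namespace TitForTat

variable {n : ℕ} {x : ℕ → Fin n → ℝ} {y : ℕ → Fin n → Fin n → ℝ} {v : Fin n → ℝ}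

theorem share_mul_succ (hx : ∀ t i, x t i ≠ 0)
    (hupd : ∀ t i j, y (t + 1) i j = v j * (y t j i * x t j) / x (t + 1) i) (t : ℕ) (i j : Fin n) :
    y (t + 1) i j * x (t + 1) i = v j * (y t j i * x t j) := by
  rw [hupd, div_mul_cancel₀ _ (hx (t + 1) i)]

theorem share_mul_add_two (hx : ∀ t i, x t i ≠ 0)
    (hupd : ∀ t i j, y (t + 1) i j = v j * (y t j i * x t j) / x (t + 1) i) (t : ℕ) (i j : Fin n) :
    y (t + 2) i j * x (t + 2) i = v i * v j * (y t i j * x t i) := by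
  rw [share_mul_succ hx hupd, share_mul_succ hx hupd]
  ring

end TitForTat

open TitForTat in
theorem stmt_7_general
(n : ℕ) (x : ℕ → Fin n → ℝ) (y : ℕ → Fin n → Fin n → ℝ) (v : Fin n → ℝ)
    (hx : ∀ t i, 0 < x t i)
    (hy : ∀ t i j, 0 < y t i j)
    (hsum : ∀ t i, ∑ j, y t i j = 1)
    (hupd : ∀ t i j, y (t + 1) i j = v j * (y t j i * x t j) / x (t + 1) i)
(vstar : ℝ) (iStar : Fin n) (hiStar : v iStar = vstar)
    (i : Fin n) (hi : 1 < v i * vstar) :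
    Tendsto (fun t => x t i) atTop atTop := by
  have hshare : Tendsto (fun t => y t i iStar * x t i) atTop atTop := by
    refine tendsto_atTop_of_add_eq_mul two_pos hi (fun t => ?_) fun r _ => ?_
    · rw [share_mul_add_two (fun t i => (hx t i).ne') hupd, hiStar]
    · exact mul_pos (hy r i iStar) (hx r i)
  refine tendsto_atTop_mono (fun t => ?_) hshare
  exact mul_le_of_le_one_left (hx t i).le
    (hsum t i ▸ single_le_sum (fun j _ => (hy t i j).le) (mem_univ iStar))

theorem stmt_7
(n : ℕ) (x : ℕ → Fin n → ℝ) (y : ℕ → Fin n → Fin n → ℝ) (v : Fin n → ℝ)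
    (hv : ∀ j, 0 < v j)
    (hx : ∀ t i, 0 < x t i)
    (hy : ∀ t i j, 0 < y t i j)
    (hsum : ∀ t i, ∑ j, y t i j = 1)
    (hprod : ∀ t i, x (t + 1) i = ∑ j, v j * (y t j i * x t j))
    (hupd : ∀ t i j, y (t + 1) i j = v j * (y t j i * x t j) / x (t + 1) i)
(vstar : ℝ) (hmax : ∀ j, v j ≤ vstar) (iStar : Fin n) (hiStar : v iStar = vstar)
    (i : Fin n) (hi : 1 < v i * vstar) :
    Tendsto (fun t => x t i) atTop atTop :=
  stmt_7_general n x y v hx hy hsum hupd vstar iStar hiStar i hi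
end

section
/- In the tit-for-tat production dynamic, if v_i·v* < 1 then x_i(t) → 0 as t → ∞, where v* = max_j v_j. -/
open Filter Finset

theorem stmt_8
(n : ℕ) (x : ℕ → Fin n → ℝ) (y : ℕ → Fin n → Fin n → ℝ) (v : Fin n → ℝ)
    (hv : ∀ j, 0 < v j)
    (hx : ∀ t i, 0 < x t i)
    (hy : ∀ t i j, 0 < y t i j)
    (hsum : ∀ t i, ∑ j, y t i j = 1)
    (hprod : ∀ t i, x (t + 1) i = ∑ j, v j * (y t j i * x t j))
    (hupd : ∀ t i j, y (t + 1) i j = v j * (y t j i * x t j) / x (t + 1) i)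
(vstar : ℝ) (hmax : ∀ j, v j ≤ vstar) (iStar : Fin n) (hiStar : v iStar = vstar)
    (i : Fin n) (hi : v i * vstar < 1) :
    Tendsto (fun t => x t i) atTop (nhds 0) := by
  set c : ℝ := v i * vstar with hc
  have hvstar : 0 < vstar := lt_of_lt_of_le (hv iStar) (le_of_eq hiStar)
  have hc0 : 0 < c := mul_pos (hv i) hvstar
  -- key two-step contraction
  have key : ∀ t, x (t + 2) i ≤ c * x t i := by
    intro t
    have h1 : x (t + 2) i = ∑ j, v j * (v i * (y t i j * x t i)) := by
      rw [hprod (t + 1) i]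
      refine Finset.sum_congr rfl fun j _ => ?_
      rw [hupd t j i, div_mul_cancel₀ _ (ne_of_gt (hx (t + 1) j))]
    have h2 : ∑ j, v j * (v i * (y t i j * x t i)) =
        (v i * x t i) * ∑ j, v j * y t i j := by
      rw [Finset.mul_sum]; exact Finset.sum_congr rfl fun j _ => by ring
    have h3 : ∑ j, v j * y t i j ≤ vstar := by
      calc ∑ j, v j * y t i j ≤ ∑ j, vstar * y t i j :=
            Finset.sum_le_sum fun j _ =>
              mul_le_mul_of_nonneg_right (hmax j) (le_of_lt (hy t i j))
        _ = vstar := by rw [← Finset.mul_sum, hsum t i, mul_one]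
    calc x (t + 2) i = (v i * x t i) * ∑ j, v j * y t i j := by rw [h1, h2]
      _ ≤ (v i * x t i) * vstar :=
          mul_le_mul_of_nonneg_left h3 (le_of_lt (mul_pos (hv i) (hx t i)))
      _ = c * x t i := by ring
  set M : ℝ := max (x 0 i) (x 1 i) with hM
  have hbound : ∀ k r, r < 2 → x (2 * k + r) i ≤ c ^ k * M := by
    intro k
    induction k with
    | zero =>
      intro r hr
      interval_cases r <;> simp [hM, le_max_left, le_max_right]
    | succ k ih =>
      intro r hr
      have : 2 * (k + 1) + r = (2 * k + r) + 2 := by ring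
      rw [this]
      calc x ((2 * k + r) + 2) i ≤ c * x (2 * k + r) i := key _
        _ ≤ c * (c ^ k * M) :=
            mul_le_mul_of_nonneg_left (ih r hr) (le_of_lt hc0)
        _ = c ^ (k + 1) * M := by ring
  have hub : ∀ t, x t i ≤ c ^ (t / 2) * M := by
    intro t
    have ht : 2 * (t / 2) + t % 2 = t := Nat.div_add_mod t 2
    have := hbound (t / 2) (t % 2) (Nat.mod_lt t (by norm_num))
    rwa [ht] at this
  have hc1 : c < 1 := hi
  have htend : Tendsto (fun t : ℕ => c ^ (t / 2) * M) atTop (nhds 0) := by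
    have h1 : Tendsto (fun k : ℕ => c ^ k) atTop (nhds 0) :=
      tendsto_pow_atTop_nhds_zero_of_lt_one (le_of_lt hc0) hc1
    have h2 : Tendsto (fun t : ℕ => t / 2) atTop atTop :=
      tendsto_atTop_atTop.2 fun b => ⟨2 * b, fun a ha => by omega⟩
    have := (h1.comp h2).mul_const M
    simpa using this
  refine tendsto_of_tendsto_of_tendsto_of_le_of_le tendsto_const_nhds htend
    (fun t => le_of_lt (hx t i)) (fun t => hub t)
end

section
/- In the tit-for-tat production dynamic, if v_i·v* = 1 then the sequence x_i(t) is bounded above and bounded away from zero, where v* = max_j v_j. -/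
/-! Two rounds of the dynamic multiply the share `y_{i,j} x_i` that player `i` sends to `j` by
exactly `v_i v_j`: it is valued by `v_i` in `j`'s output, and that output is returned to `i` in
proportion and valued by `v_j`. Hence `x_i(r + 2s) = ∑_j (v_i v_j)^s y_{i,j}(r) x_i(r)`.
When `v_i v* = 1` every factor `v_i v_j` lies in `(0, 1]` and the one for `j = i*` equals `1`,
so `x_i(r + 2s)` stays between the share sent to `i*` at time `r` and `x_i(r)`. -/

open Finset

section Weights

variable {ι : Type*} [Fintype ι] {a h : ι → ℝ}

theorem sum_pow_mul_le_sum (ha₀ : ∀ j, 0 ≤ a j) (ha₁ : ∀ j, a j ≤ 1) (hh : ∀ j, 0 ≤ h j)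
    (s : ℕ) : ∑ j, a j ^ s * h j ≤ ∑ j, h j :=
  sum_le_sum fun j _ => mul_le_of_le_one_left (hh j) (pow_le_one₀ (ha₀ j) (ha₁ j))

theorem le_sum_pow_mul (ha₀ : ∀ j, 0 ≤ a j) (hh : ∀ j, 0 ≤ h j) {j₀ : ι} (hj₀ : a j₀ = 1)
    (s : ℕ) : h j₀ ≤ ∑ j, a j ^ s * h j := by
  simpa [hj₀] using single_le_sum (f := fun j => a j ^ s * h j)
    (fun j _ => mul_nonneg (pow_nonneg (ha₀ j) s) (hh j)) (mem_univ j₀)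

end Weights

section TitForTat

variable {ι : Type*} {x : ℕ → ι → ℝ} {y : ℕ → ι → ι → ℝ} {v : ι → ℝ}

theorem share_add_two (hx : ∀ t i, x t i ≠ 0)
    (hupd : ∀ t i j, y (t + 1) i j = v j * (y t j i * x t j) / x (t + 1) i) (t : ℕ) (i j : ι) :
    y (t + 2) i j * x (t + 2) i = v i * v j * (y t i j * x t i) := by
  rw [hupd (t + 1) i j, hupd t j i]
  field_simp [hx (t + 2) i, hx (t + 1) j]

theorem share_add_two_mul (hx : ∀ t i, x t i ≠ 0)
    (hupd : ∀ t i j, y (t + 1) i j = v j * (y t j i * x t j) / x (t + 1) i) (t s : ℕ)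
    (i j : ι) :
    y (t + 2 * s) i j * x (t + 2 * s) i = (v i * v j) ^ s * (y t i j * x t i) := by
  induction s with
  | zero => simp
  | succ s ih => rw [mul_add_one, ← add_assoc, share_add_two hx hupd, ih, pow_succ]; ring

theorem eq_sum_pow_mul_share [Fintype ι] (hx : ∀ t i, x t i ≠ 0)
    (hsum : ∀ t i, ∑ j, y t i j = 1)
    (hupd : ∀ t i j, y (t + 1) i j = v j * (y t j i * x t j) / x (t + 1) i) (t s : ℕ) (i : ι) :
    x (t + 2 * s) i = ∑ j, (v i * v j) ^ s * (y t i j * x t i) := by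
  simp_rw [← share_add_two_mul hx hupd, ← sum_mul, hsum, one_mul]

end TitForTat

theorem stmt_9_general
(n : ℕ) (x : ℕ → Fin n → ℝ) (y : ℕ → Fin n → Fin n → ℝ) (v : Fin n → ℝ)
    (hv : ∀ j, 0 < v j)
    (hx : ∀ t i, 0 < x t i)
    (hy : ∀ t i j, 0 < y t i j)
    (hsum : ∀ t i, ∑ j, y t i j = 1)
    (hupd : ∀ t i j, y (t + 1) i j = v j * (y t j i * x t j) / x (t + 1) i)
(vstar : ℝ) (hmax : ∀ j, v j ≤ vstar) (iStar : Fin n) (hiStar : v iStar = vstar)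
    (i : Fin n) (hi : v i * vstar = 1) :
    ∃ m M : ℝ, 0 < m ∧ ∀ t : ℕ, m ≤ x t i ∧ x t i ≤ M := by
  have hx₀ : ∀ t i, x t i ≠ 0 := fun t i => (hx t i).ne'
  have hrate₀ : ∀ j, 0 ≤ v i * v j := fun j => (mul_pos (hv i) (hv j)).le
  have hrate₁ : ∀ j, v i * v j ≤ 1 := fun j =>
    hi ▸ mul_le_mul_of_nonneg_left (hmax j) (hv i).le
  have hshare : ∀ r j, 0 ≤ y r i j * x r i := fun r j => (mul_pos (hy r i j) (hx r i)).le
  refine ⟨min (y 0 i iStar * x 0 i) (y 1 i iStar * x 1 i), max (x 0 i) (x 1 i),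
    lt_min (mul_pos (hy 0 i iStar) (hx 0 i)) (mul_pos (hy 1 i iStar) (hx 1 i)), fun t => ?_⟩
  obtain ⟨r, s, hr, rfl⟩ : ∃ r s, r < 2 ∧ t = r + 2 * s := ⟨t % 2, t / 2, t.mod_lt two_pos, by omega⟩
  have hlower := le_sum_pow_mul hrate₀ (hshare r) (hiStar ▸ hi) s
  have hupper := sum_pow_mul_le_sum hrate₀ hrate₁ (hshare r) s
  rw [← sum_mul, hsum, one_mul] at hupper
  rw [eq_sum_pow_mul_share hx₀ hsum hupd]
  interval_cases r
  · exact ⟨(min_le_left _ _).trans hlower, hupper.trans (le_max_left _ _)⟩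
  · exact ⟨(min_le_right _ _).trans hlower, hupper.trans (le_max_right _ _)⟩

theorem stmt_9
(n : ℕ) (x : ℕ → Fin n → ℝ) (y : ℕ → Fin n → Fin n → ℝ) (v : Fin n → ℝ)
    (hv : ∀ j, 0 < v j)
    (hx : ∀ t i, 0 < x t i)
    (hy : ∀ t i j, 0 < y t i j)
    (hsum : ∀ t i, ∑ j, y t i j = 1)
    (hprod : ∀ t i, x (t + 1) i = ∑ j, v j * (y t j i * x t j))
    (hupd : ∀ t i j, y (t + 1) i j = v j * (y t j i * x t j) / x (t + 1) i)
(vstar : ℝ) (hmax : ∀ j, v j ≤ vstar) (iStar : Fin n) (hiStar : v iStar = vstar)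
    (i : Fin n) (hi : v i * vstar = 1) :
    ∃ m M : ℝ, 0 < m ∧ ∀ t : ℕ, m ≤ x t i ∧ x t i ≤ M :=
  stmt_9_general n x y v hv hx hy hsum hupd vstar hmax iStar hiStar i hi
end

section
/- In the tit-for-tat production dynamic, for every player i and every player j with v_j < v* = max_k v_k, the fraction y_{i,j}(t) converges to 0 as t → ∞. -/
/-!
Two steps of the dynamic send `y i j` through `y j i` and back, so
`y (t + 2) i j = (v i * x t i / x (t + 2) i) * (v j * y t i j)`: the prefactor depends on `i`
alone. Hence the ratio `y t i j / y t i iStar` is multiplied by `v j / v*` every two steps and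
tends to `0`, and it dominates `y t i j` because `y t i iStar ≤ 1`.
-/

open Filter Finset Topology

lemma eq_pow_div_two_mul_of_two_step {R : Type*} [Monoid R] {r : ℕ → R} {q : R}
    (h : ∀ t, r (t + 2) = q * r t) (t : ℕ) : r t = q ^ (t / 2) * r (t % 2) := by
  induction t using Nat.twoStepInduction with
  | zero => simp
  | one => simp
  | more t ih _ =>
    rw [h, ih, ← mul_assoc, ← pow_succ', Nat.add_mod_right, Nat.add_div_right t two_pos]

lemma tendsto_zero_of_two_step {R : Type*} [NormedRing R] {r : ℕ → R} {q : R} (hq : ‖q‖ < 1)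
    (h : ∀ t, r (t + 2) = q * r t) : Tendsto r atTop (𝓝 0) := by
  have hpow : Tendsto (fun t => q ^ (t / 2)) atTop (𝓝 0) :=
    (tendsto_pow_atTop_nhds_zero_of_norm_lt_one hq).comp (Nat.tendsto_div_const_atTop two_ne_zero)
  have hbdd : IsBoundedUnder (· ≤ ·) atTop (fun t => ‖r (t % 2)‖) := by
    refine isBoundedUnder_of ⟨max ‖r 0‖ ‖r 1‖, fun t => ?_⟩
    rcases Nat.mod_two_eq_zero_or_one t with h0 | h1
    · simp [h0]
    · simp [h1]
  simpa only [← eq_pow_div_two_mul_of_two_step h] using hpow.zero_mul_isBoundedUnder_le hbdd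

section TitForTat

variable {ι : Type*} {x : ℕ → ι → ℝ} {y : ℕ → ι → ι → ℝ} {v : ι → ℝ}

lemma tit_for_tat_two_step (hx : ∀ t i, x t i ≠ 0)
    (hupd : ∀ t i j, y (t + 1) i j = v j * (y t j i * x t j) / x (t + 1) i) (t : ℕ) (i j : ι) :
    y (t + 2) i j = v i * x t i / x (t + 2) i * (v j * y t i j) := by
  rw [hupd (t + 1) i j, hupd t j i, div_mul_cancel₀ _ (hx (t + 1) j)]
  ring

lemma tit_for_tat_ratio_two_step (hv : ∀ i, v i ≠ 0) (hx : ∀ t i, x t i ≠ 0)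
    (hupd : ∀ t i j, y (t + 1) i j = v j * (y t j i * x t j) / x (t + 1) i) (t : ℕ) (i j k : ι) :
    y (t + 2) i j / y (t + 2) i k = v j / v k * (y t i j / y t i k) := by
  have hc : v i * x t i / x (t + 2) i ≠ 0 := div_ne_zero (mul_ne_zero (hv i) (hx t i)) (hx _ i)
  rw [tit_for_tat_two_step hx hupd, tit_for_tat_two_step hx hupd, mul_div_mul_left _ _ hc,
    mul_div_mul_comm]

end TitForTat

theorem stmt_10_general
(n : ℕ) (x : ℕ → Fin n → ℝ) (y : ℕ → Fin n → Fin n → ℝ) (v : Fin n → ℝ)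
    (hv : ∀ j, 0 < v j)
    (hx : ∀ t i, 0 < x t i)
    (hy : ∀ t i j, 0 < y t i j)
    (hsum : ∀ t i, ∑ j, y t i j = 1)
    (hupd : ∀ t i j, y (t + 1) i j = v j * (y t j i * x t j) / x (t + 1) i)
(vstar : ℝ) (iStar : Fin n) (hiStar : v iStar = vstar)
    (i j : Fin n) (hj : v j < vstar) :
    Tendsto (fun t => y t i j) atTop (nhds 0) := by
  subst hiStar
  have hq : ‖v j / v iStar‖ < 1 := by
    rw [Real.norm_of_nonneg (div_pos (hv j) (hv iStar)).le]
    exact (div_lt_one (hv iStar)).2 hj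
  have hratio : Tendsto (fun t => y t i j / y t i iStar) atTop (𝓝 0) :=
    tendsto_zero_of_two_step hq
      (tit_for_tat_ratio_two_step (fun k => (hv k).ne') (fun t k => (hx t k).ne') hupd · i j iStar)
  have hle_one : ∀ t, y t i iStar ≤ 1 := fun t =>
    hsum t i ▸ single_le_sum (fun k _ => (hy t i k).le) (mem_univ iStar)
  exact squeeze_zero (fun t => (hy t i j).le)
    (fun t => le_div_self (hy t i j).le (hy t i iStar) (hle_one t)) hratio

theorem stmt_10
(n : ℕ) (x : ℕ → Fin n → ℝ) (y : ℕ → Fin n → Fin n → ℝ) (v : Fin n → ℝ)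
    (hv : ∀ j, 0 < v j)
    (hx : ∀ t i, 0 < x t i)
    (hy : ∀ t i j, 0 < y t i j)
    (hsum : ∀ t i, ∑ j, y t i j = 1)
    (hprod : ∀ t i, x (t + 1) i = ∑ j, v j * (y t j i * x t j))
    (hupd : ∀ t i j, y (t + 1) i j = v j * (y t j i * x t j) / x (t + 1) i)
(vstar : ℝ) (hmax : ∀ j, v j ≤ vstar) (iStar : Fin n) (hiStar : v iStar = vstar)
    (i j : Fin n) (hj : v j < vstar) :
    Tendsto (fun t => y t i j) atTop (nhds 0) :=
  stmt_10_general n x y v hv hx hy hsum hupd vstar iStar hiStar i j hj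
end

section
/- In the tit-for-tat production dynamic, every player i with v_i > 1 satisfies x_i(t) → ∞ as t → ∞. -/
open Filter Finset

theorem stmt_12
(n : ℕ) (x : ℕ → Fin n → ℝ) (y : ℕ → Fin n → Fin n → ℝ) (v : Fin n → ℝ)
    (hv : ∀ j, 0 < v j)
    (hx : ∀ t i, 0 < x t i)
    (hy : ∀ t i j, 0 < y t i j)
    (hsum : ∀ t i, ∑ j, y t i j = 1)
    (hprod : ∀ t i, x (t + 1) i = ∑ j, v j * (y t j i * x t j))
    (hupd : ∀ t i j, y (t + 1) i j = v j * (y t j i * x t j) / x (t + 1) i)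
    (i : Fin n) (hi : 1 < v i) :
    Tendsto (fun t => x t i) atTop atTop := by
  set g : ℕ → ℝ := fun t => x t i * y t i i with hg
  have hgrec : ∀ t, g (t + 1) = v i * g t := by
    intro t
    have hxne : x (t + 1) i ≠ 0 := (hx (t + 1) i).ne'
    simp only [hg]
    rw [hupd t i i, mul_div_assoc', mul_comm (x (t+1) i), mul_div_assoc,
      div_self hxne, mul_one]
    ring
  have hgpow : ∀ t, g t = v i ^ t * g 0 := by
    intro t
    induction t with
    | zero => simp
    | succ t ih => rw [hgrec t, ih, pow_succ]; ring
  have hg0 : 0 < g 0 := mul_pos (hx 0 i) (hy 0 i i)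
  have hyle : ∀ t, y t i i ≤ 1 := by
    intro t
    rw [← hsum t i]
    exact single_le_sum (fun j _ => (hy t i j).le) (mem_univ i)
  have hle : ∀ t, v i ^ t * g 0 ≤ x t i := by
    intro t
    calc v i ^ t * g 0 = g t := (hgpow t).symm
    _ = x t i * y t i i := rfl
    _ ≤ x t i * 1 := mul_le_mul_of_nonneg_left (hyle t) (hx t i).le
    _ = x t i := mul_one _
  have htend : Tendsto (fun t => v i ^ t * g 0) atTop atTop :=
    (tendsto_pow_atTop_atTop_of_one_lt hi).atTop_mul_const hg0
  exact tendsto_atTop_mono hle htend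
end

section
/- In the tit-for-tat production dynamic, for all players i, j and all ℓ ∈ ℕ, y_{i,j}(2ℓ+1) ≤ (x_i(1)·y_{i,j}(1)/c_i) · (v_j/v*)^ℓ, where c_i > 0 is any constant with x_i(2ℓ+1) ≥ c_i·(v_i·v*)^ℓ for all ℓ, and v* = max_k v_k. -/
open Filter Finset

/-!
The amount `x_a(t) y_{a,b}(t)` that player `a` ships to player `b` becomes, one round later,
`v_b`-times the amount shipped back from `b` to `a`. After two rounds the shipment from `i` to `j`
has therefore been multiplied by exactly `v_i v_j`, so `x_i(2ℓ+1) y_{i,j}(2ℓ+1) = (v_i v_j)^ℓ x_i(1) y_{i,j}(1)`,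
and dividing by the lower bound `c (v_i v*)^ℓ` on `x_i(2ℓ+1)` gives the estimate.
-/

section TitForTat

variable {ι : Type*} {x : ℕ → ι → ℝ} {y : ℕ → ι → ι → ℝ} {v : ι → ℝ}

theorem x_mul_y_succ {t : ℕ} {a b : ι} (hx : x (t + 1) a ≠ 0)
    (hupd : y (t + 1) a b = v b * (y t b a * x t b) / x (t + 1) a) :
    x (t + 1) a * y (t + 1) a b = v b * (x t b * y t b a) := by
  rw [hupd, mul_div_cancel₀ _ hx]
  ring

theorem x_mul_y_two_mul_add (hx : ∀ t a, x t a ≠ 0)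
    (hupd : ∀ t a b, y (t + 1) a b = v b * (y t b a * x t b) / x (t + 1) a) (a b : ι) (s l : ℕ) :
    x (2 * l + s) a * y (2 * l + s) a b = (v a * v b) ^ l * (x s a * y s a b) := by
  induction l with
  | zero => simp
  | succ l ih =>
    rw [show 2 * (l + 1) + s = 2 * l + s + 1 + 1 by ring, x_mul_y_succ (hx _ _) (hupd _ _ _),
      x_mul_y_succ (hx _ _) (hupd _ _ _), ih]
    ring

end TitForTat

theorem stmt_15_general
(n : ℕ) (x : ℕ → Fin n → ℝ) (y : ℕ → Fin n → Fin n → ℝ) (v : Fin n → ℝ)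
    (hv : ∀ j, 0 < v j)
    (hx : ∀ t i, 0 < x t i)
    (hy : ∀ t i j, 0 < y t i j)
    (hupd : ∀ t i j, y (t + 1) i j = v j * (y t j i * x t j) / x (t + 1) i)
(vstar : ℝ) (hmax : ∀ j, v j ≤ vstar)
    (i : Fin n) (c : ℝ) (hc : 0 < c)
    (hlb : ∀ l : ℕ, c * (v i * vstar) ^ l ≤ x (2 * l + 1) i)
    (j : Fin n) (l : ℕ) :
    y (2 * l + 1) i j ≤ (x 1 i * y 1 i j / c) * (v j / vstar) ^ l := by
  have hvi := hv i
  have hvj := hv j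
  have hvstar : 0 < vstar := hvj.trans_le (hmax j)
  have hx1 := hx 1 i
  have hy1 := hy 1 i j
  have hflow := x_mul_y_two_mul_add (fun t a ↦ (hx t a).ne') hupd i j 1 l
  calc y (2 * l + 1) i j = (v i * v j) ^ l * (x 1 i * y 1 i j) / x (2 * l + 1) i := by
        rw [← hflow, mul_div_cancel_left₀ _ (hx _ i).ne']
    _ ≤ (v i * v j) ^ l * (x 1 i * y 1 i j) / (c * (v i * vstar) ^ l) :=
        div_le_div_of_nonneg_left (by positivity) (by positivity) (hlb l)
    _ = (x 1 i * y 1 i j / c) * (v j / vstar) ^ l := by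
        rw [div_pow, mul_pow, mul_pow]
        field_simp

theorem stmt_15
(n : ℕ) (x : ℕ → Fin n → ℝ) (y : ℕ → Fin n → Fin n → ℝ) (v : Fin n → ℝ)
    (hv : ∀ j, 0 < v j)
    (hx : ∀ t i, 0 < x t i)
    (hy : ∀ t i j, 0 < y t i j)
    (hsum : ∀ t i, ∑ j, y t i j = 1)
    (hprod : ∀ t i, x (t + 1) i = ∑ j, v j * (y t j i * x t j))
    (hupd : ∀ t i j, y (t + 1) i j = v j * (y t j i * x t j) / x (t + 1) i)
(vstar : ℝ) (hmax : ∀ j, v j ≤ vstar) (iStar : Fin n) (hiStar : v iStar = vstar)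
    (i : Fin n) (c : ℝ) (hc : 0 < c)
    (hlb : ∀ l : ℕ, c * (v i * vstar) ^ l ≤ x (2 * l + 1) i)
    (j : Fin n) (l : ℕ) :
    y (2 * l + 1) i j ≤ (x 1 i * y 1 i j / c) * (v j / vstar) ^ l :=
  stmt_15_general n x y v hv hx hy hupd vstar hmax i c hc hlb j l
end
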